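/- arXiv:2310.08930 — 2 statements merged into one kernel-verified Lean document; each statement's English description precedes it below -/
import Mathlib

section
/- The characteristic polynomial of the $(n-1)\times(n-1)$ matrix $M=D(I-\Lambda J)+z_n\Lambda J$ equals $q(z)$, where $q$ is the monic polynomial of degree $n-1$ defined by $q(z)/p(z)=\sum_{j=1}^n \lambda_j/(z-z_j)$. -/
/-!
The characteristic matrix of `M = D (I - Λ J) + z_n Λ J` is
`diag (X - z_i) + u 1ᵀ` with `u_i = (z_i - z_n) λ_i`, a rank-one perturbation of a diagonal
matrix, so the matrix determinant lemma gives
`det = ∏_i (X - z_i) + ∑_i u_i ∏_{k ≠ i} (X - z_k)`. Expanding `q` with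
`X - z_n = (X - z_j) + (z_j - z_n)` in each term `j < n` and using `∑_j λ_j = 1` gives the same
expression.
-/

open Polynomial Finset Matrix

theorem Matrix.det_diagonal_add_vecMulVec_of_field {K n : Type*} [Field K]
    [Fintype n] [DecidableEq n] {d : n → K} (hd : ∀ i, d i ≠ 0) (u v : n → K) :
    (diagonal d + vecMulVec u v).det
      = ∏ i, d i + ∑ i, u i * v i * ∏ k ∈ univ.erase i, d k := by
  have hfactor :
      diagonal d + vecMulVec u v = diagonal d * (1 + vecMulVec (fun i => u i / d i) v) := by
    rw [Matrix.mul_add, Matrix.mul_one]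
    congr 1
    ext i j
    simp [vecMulVec_apply, ← mul_assoc, mul_div_cancel₀ _ (hd i)]
  rw [hfactor, det_mul, det_diagonal, vecMulVec_eq Unit, det_one_add_replicateCol_mul_replicateRow,
    mul_add, mul_one, dotProduct, mul_sum]
  refine congrArg _ (sum_congr rfl fun i _ => ?_)
  rw [← mul_prod_erase univ d (mem_univ i)]
  field_simp [hd i]

theorem Matrix.det_diagonal_add_vecMulVec {R n : Type*} [CommRing R] [IsDomain R]
    [Fintype n] [DecidableEq n] {d : n → R} (hd : ∀ i, d i ≠ 0) (u v : n → R) :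
    (diagonal d + vecMulVec u v).det
      = ∏ i, d i + ∑ i, u i * v i * ∏ k ∈ univ.erase i, d k := by
  let φ := algebraMap R (FractionRing R)
  have hφ : Function.Injective φ := IsFractionRing.injective R (FractionRing R)
  apply hφ
  have hmap : φ.mapMatrix (diagonal d + vecMulVec u v)
      = diagonal (fun i => φ (d i)) + vecMulVec (fun i => φ (u i)) (fun i => φ (v i)) := by
    ext i j
    simp [diagonal_apply, apply_ite φ, vecMulVec_apply]
  rw [RingHom.map_det, hmap, det_diagonal_add_vecMulVec_of_field
    (fun i => (map_ne_zero_iff φ hφ).mpr (hd i))]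
  simp only [map_add, map_sum, map_mul, map_prod]

theorem Matrix.charmatrix_diagonal_mul_one_sub_add_smul {R : Type*} [CommRing R] {m : ℕ}
    (z lam : Fin m → R) (c : R) :
    charmatrix (diagonal z * (1 - diagonal lam * of (fun _ _ => 1)) +
        c • (diagonal lam * of (fun _ _ => 1)))
      = diagonal (fun i => X - C (z i)) + vecMulVec (fun i => C ((z i - c) * lam i)) 1 := by
  refine Matrix.ext fun i j => ?_
  by_cases hij : i = j <;>
    simp [hij, mul_apply, diagonal_apply, sub_mul, mul_sub] <;> ring

theorem Fin.prod_univ_erase_eq_prod_range_erase {M : Type*} [CommMonoid M] {m : ℕ} (f : ℕ → M)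
    (i : Fin m) :
    ∏ k ∈ univ.erase i, f k = ∏ k ∈ (range m).erase i, f k := by
  rw [← Nat.Iio_eq_range, ← Fin.map_valEmbedding_univ]
  change _ = ∏ k ∈ (map valEmbedding univ).erase (valEmbedding i), f k
  rw [← map_erase, prod_map]
  rfl

theorem prod_range_succ_erase_X_sub_C {R : Type*} [CommRing R] (z : ℕ → R) {m j : ℕ}
    (hj : j < m) :
    ∏ i ∈ (range (m + 1)).erase j, (X - C (z i))
      = ∏ i ∈ range m, (X - C (z i)) + C (z j - z m) * ∏ i ∈ (range m).erase j, (X - C (z i)) := by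
  rw [range_add_one, erase_insert_of_ne hj.ne', prod_insert (by simp),
    ← mul_prod_erase (range m) (fun i => X - C (z i)) (mem_range.mpr hj), C_sub]
  ring

theorem sum_C_mul_prod_range_succ_erase_X_sub_C {R : Type*} [CommRing R] (z lam : ℕ → R)
    (m : ℕ) :
    ∑ j ∈ range (m + 1), C (lam j) * ∏ i ∈ (range (m + 1)).erase j, (X - C (z i))
      = C (∑ j ∈ range (m + 1), lam j) * ∏ i ∈ range m, (X - C (z i))
        + ∑ j ∈ range m, C ((z j - z m) * lam j) * ∏ i ∈ (range m).erase j, (X - C (z i)) := by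
  have hlast : (range (m + 1)).erase m = range m := by simp [range_add_one]
  rw [sum_range_succ, hlast, sum_congr rfl fun j hj => by
    rw [prod_range_succ_erase_X_sub_C z (mem_range.mp hj)], map_sum, sum_range_succ]
  simp only [mul_add, sum_add_distrib, ← sum_mul, C_mul, mul_assoc, mul_left_comm (C (lam _))]
  ring

theorem charpoly_reduced_D_companion_general
    (n : ℕ) (z lam : ℕ → ℂ)
    (hlam : ∑ j ∈ Finset.range n, lam j = 1) :
    (let D : Matrix (Fin (n - 1)) (Fin (n - 1)) ℂ :=
        Matrix.diagonal (fun i => z (i : ℕ));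
     let Λ : Matrix (Fin (n - 1)) (Fin (n - 1)) ℂ :=
        Matrix.diagonal (fun i => lam (i : ℕ));
     let J : Matrix (Fin (n - 1)) (Fin (n - 1)) ℂ :=
        Matrix.of (fun _ _ => (1 : ℂ));
     (D * (1 - Λ * J) + z (n - 1) • (Λ * J)).charpoly)
      = ∑ j ∈ Finset.range n, C (lam j) *
          ∏ i ∈ (Finset.range n).erase j, (X - C (z i)) := by
  cases n with
  | zero => simp at hlam
  | succ m =>
    rw [charpoly, charmatrix_diagonal_mul_one_sub_add_smul,
      det_diagonal_add_vecMulVec fun i => X_sub_C_ne_zero _,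
      sum_C_mul_prod_range_succ_erase_X_sub_C, hlam, C_1, one_mul,
      Fin.prod_univ_eq_prod_range (fun i => X - C (z i))]
    simp only [Nat.add_sub_cancel, Pi.one_apply, mul_one,
      Fin.prod_univ_erase_eq_prod_range_erase fun k => X - C (z k)]
    exact congrArg _ (Fin.sum_univ_eq_sum_range
      (fun j => C ((z j - z m) * lam j) * ∏ k ∈ (range m).erase j, (X - C (z k))) m)

theorem charpoly_reduced_D_companion
    (n : ℕ) (hn : 1 ≤ n) (z lam : ℕ → ℂ)
    (hlam : ∑ j ∈ Finset.range n, lam j = 1) :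
    (let D : Matrix (Fin (n - 1)) (Fin (n - 1)) ℂ :=
        Matrix.diagonal (fun i => z (i : ℕ));
     let Λ : Matrix (Fin (n - 1)) (Fin (n - 1)) ℂ :=
        Matrix.diagonal (fun i => lam (i : ℕ));
     let J : Matrix (Fin (n - 1)) (Fin (n - 1)) ℂ :=
        Matrix.of (fun _ _ => (1 : ℂ));
     (D * (1 - Λ * J) + z (n - 1) • (Λ * J)).charpoly)
      = ∑ j ∈ Finset.range n, C (lam j) *
          ∏ i ∈ (Finset.range n).erase j, (X - C (z i)) :=
  charpoly_reduced_D_companion_general n z lam hlam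
end

section
/- All zeros of the derivative $p'(z)$ lie in the disk $\left|z-\frac{\sum_{j=1}^n z_j}{n}\right|\le \sqrt{\frac{n-2}{n-1}}\left(\sum_{j=1}^{n-1}\left|\frac{n-1}{n}z_j+\frac{1}{n}z_n\right|^2+\frac{n-2}{n^2}\sum_{j=1}^{n-1}|z_n-z_j|^2-\frac{n-1}{n^2}\left|\sum_{j=1}^n z_j\right|^2\right)^{1/2}$. -/
/-!
Write `n = m + 1`. Every critical point `w` of `p` is an eigenvalue of the `m × m` matrix
`M = diag(z₀, …, z_{m-1}) + u 𝟙ᵀ`, `u_j = (z_m - z_j) / n`: if `p w ≠ 0` then `∑ 1 / (w - z_j) = 0`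
and `x_j = (z_m - z_j) / (w - z_j)` is an eigenvector; if `p w = 0` then `w` is a multiple root and
an eigenvector is built from two indices with `z_j = w`. Since `tr M = m c` for the centroid `c` of
the roots, `A = M - c I` is traceless with eigenvalue `w - c`. For traceless `A` with `A x = μ x`,
the matrix `B = x̄ xᵀ - (‖x‖² / m) I` has Frobenius inner product `⟨A, B⟩ = μ ‖x‖²` and
`‖B‖² = ‖x‖⁴ (m - 1) / m`, so Cauchy–Schwarz gives `|μ|² ≤ (m - 1) / m · ‖A‖²`; and `‖M - c I‖²`
is the expression under the square root.
-/

open Polynomial Finset Matrix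

section

variable {K ι : Type*} [Field K] {s : Finset ι} {z : ι → K} {w : K}

theorem sum_sub_div_sub_eq_card_of_sum_inv_sub_eq_zero (hz : ∀ j ∈ s, z j ≠ w)
    (hsum : ∑ j ∈ s, (w - z j)⁻¹ = 0) (a : K) :
    ∑ j ∈ s, (a - z j) / (w - z j) = #s := by
  have hterm : ∀ j ∈ s, (a - z j) / (w - z j) = (a - w) * (w - z j)⁻¹ + 1 := by
    intro j hj
    have := sub_ne_zero.2 (hz j hj).symm
    field_simp
    ring
  rw [sum_congr rfl hterm, sum_add_distrib, ← mul_sum, hsum, mul_zero, zero_add, sum_const,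
    nsmul_one]

namespace Polynomial

variable [DecidableEq ι]

theorem eval_derivative_prod_X_sub_C :
    (derivative (∏ j ∈ s, (X - C (z j)))).eval w = ∑ j ∈ s, ∏ k ∈ s.erase j, (w - z k) := by
  simp [derivative_prod_finset, eval_prod, eval_finsetSum]

theorem exists_ne_eq_of_isRoot_derivative_prod
    (hw : (derivative (∏ j ∈ s, (X - C (z j)))).IsRoot w) {i : ι} (hi : i ∈ s) (hzi : z i = w) :
    ∃ k ∈ s, k ≠ i ∧ z k = w := by
  rw [IsRoot, eval_derivative_prod_X_sub_C, sum_eq_single_of_mem i hi] at hw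
  · obtain ⟨k, hk, hzk⟩ := prod_eq_zero_iff.1 hw
    exact ⟨k, mem_of_mem_erase hk, ne_of_mem_erase hk, (sub_eq_zero.1 hzk).symm⟩
  · intro j _ hji
    exact prod_eq_zero (mem_erase.2 ⟨Ne.symm hji, hi⟩) (by rw [hzi, sub_self])

theorem sum_inv_sub_eq_zero_of_isRoot_derivative_prod
    (hw : (derivative (∏ j ∈ s, (X - C (z j)))).IsRoot w) (hz : ∀ j ∈ s, z j ≠ w) :
    ∑ j ∈ s, (w - z j)⁻¹ = 0 := by
  have hne : ∀ j ∈ s, w - z j ≠ 0 := fun j hj => sub_ne_zero.2 (hz j hj).symm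
  have hsplit : ∑ j ∈ s, ∏ k ∈ s.erase j, (w - z k)
      = (∏ k ∈ s, (w - z k)) * ∑ j ∈ s, (w - z j)⁻¹ := by
    rw [mul_sum]
    refine sum_congr rfl fun j hj => ?_
    rw [← mul_prod_erase s _ hj, mul_comm, inv_mul_cancel_left₀ (hne j hj)]
  rw [IsRoot, eval_derivative_prod_X_sub_C, hsplit] at hw
  exact (mul_eq_zero.1 hw).resolve_left (prod_ne_zero_iff.2 hne)

end Polynomial

end

theorem norm_sum_mul_sq_le {ι : Type*} [Fintype ι] (f g : ι → ℂ) :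
    ‖∑ i, f i * g i‖ ^ 2 ≤ (∑ i, ‖f i‖ ^ 2) * ∑ i, ‖g i‖ ^ 2 := by
  have h : ‖∑ i, f i * g i‖ ≤ ∑ i, ‖f i‖ * ‖g i‖ :=
    (norm_sum_le _ _).trans_eq (sum_congr rfl fun i _ => norm_mul _ _)
  exact (pow_le_pow_left₀ (norm_nonneg _) h 2).trans (sum_mul_sq_le_sq_mul_sq _ _ _)

theorem sum_norm_sq_sub_of_sum_eq {ι E : Type*} [NormedAddCommGroup E] [InnerProductSpace ℝ E]
    (s : Finset ι) (f : ι → E) (c : E) (h : ∑ i ∈ s, f i = #s • c) :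
    ∑ i ∈ s, ‖f i - c‖ ^ 2 = ∑ i ∈ s, ‖f i‖ ^ 2 - #s * ‖c‖ ^ 2 := by
  have hinner : ∑ i ∈ s, inner ℝ (f i) c = #s * ‖c‖ ^ 2 := by
    rw [← sum_inner, h, ← Nat.cast_smul_eq_nsmul ℝ, real_inner_smul_left,
      real_inner_self_eq_norm_sq]
  simp only [norm_sub_sq_real, sum_add_distrib, sum_sub_distrib, ← mul_sum, hinner, sum_const,
    nsmul_eq_mul]
  ring

section Frobenius

variable {ι : Type*} [Fintype ι] [DecidableEq ι]

theorem Matrix.norm_sq_le_of_trace_eq_zero {A : Matrix ι ι ℂ} (hA : A.trace = 0) {μ : ℂ}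
    {x : ι → ℂ} (hx : x ≠ 0) (hAx : A *ᵥ x = μ • x) :
    ‖μ‖ ^ 2 ≤ (Fintype.card ι - 1) / Fintype.card ι * ∑ i, ∑ j, ‖A i j‖ ^ 2 := by
  set s : ℝ := ∑ i, ‖x i‖ ^ 2
  set m : ℝ := (Fintype.card ι : ℝ)
  obtain ⟨i₀, hi₀⟩ := Function.ne_iff.1 hx
  have hs : 0 < s := sum_pos' (fun i _ => by positivity) ⟨i₀, mem_univ _, by positivity⟩
  have hm : 0 < m := by simpa [m] using Fintype.card_pos_iff.2 ⟨i₀⟩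
  have hconj : ∀ i, star (x i) * x i = ((‖x i‖ ^ 2 : ℝ) : ℂ) := fun i => by
    push_cast
    exact Complex.conj_mul' _
  let B : Matrix ι ι ℂ := fun i j => star (x i) * x j - if i = j then ((s / m : ℝ) : ℂ) else 0
  have hpair : ∑ i, ∑ j, A i j * B i j = μ * s := by
    have hrow : ∀ i, ∑ j, A i j * B i j
        = star (x i) * (A *ᵥ x) i - ((s / m : ℝ) : ℂ) * A i i := by
      intro i
      simp only [B, mul_sub, mul_ite, mul_zero, sum_sub_distrib, sum_ite_eq, mem_univ, if_true,
        mulVec, dotProduct, mul_sum]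
      congr 1
      · exact sum_congr rfl fun j _ => by ring
      · ring
    simp only [hrow, sum_sub_distrib, ← mul_sum, hAx, Pi.smul_apply, smul_eq_mul]
    rw [show ∑ i, A i i = A.trace from rfl, hA, mul_zero, sub_zero, Complex.ofReal_sum]
    simp only [mul_left_comm _ μ, ← mul_sum, hconj]
  have hnormB : ∑ i, ∑ j, ‖B i j‖ ^ 2 = s ^ 2 * ((m - 1) / m) := by
    have hentry : ∀ i j, ‖B i j‖ ^ 2 = ‖x i‖ ^ 2 * ‖x j‖ ^ 2
        + if i = j then (s / m) ^ 2 - 2 * (s / m) * ‖x i‖ ^ 2 else 0 := by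
      intro i j
      by_cases hij : i = j
      · subst hij
        simp only [B, if_true, hconj, ← Complex.ofReal_sub, Complex.norm_real, Real.norm_eq_abs,
          sq_abs]
        ring
      · simp [B, hij, mul_pow]
    simp only [hentry, sum_add_distrib, sum_ite_eq, mem_univ, if_true, ← sum_mul, ← mul_sum,
      sum_sub_distrib, sum_const, card_univ, nsmul_eq_mul]
    field_simp
    ring
  have hcs := norm_sum_mul_sq_le (fun p : ι × ι => A p.1 p.2) (fun p => B p.1 p.2)
  simp only [Fintype.sum_prod_type, hpair, hnormB, norm_mul, Complex.norm_real,
    Real.norm_of_nonneg hs.le] at hcs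
  exact le_of_mul_le_mul_left (by linarith) (pow_pos hs 2)

theorem sum_norm_sq_diagonal_add_of (a u : ι → ℂ) :
    ∑ i, ∑ j, ‖(diagonal a + of fun i (_ : ι) => u i) i j‖ ^ 2
      = ∑ i, (‖a i + u i‖ ^ 2 + (Fintype.card ι - 1) * ‖u i‖ ^ 2) := by
  have hentry : ∀ i j, ‖(diagonal a + of fun i (_ : ι) => u i) i j‖ ^ 2
      = ‖u i‖ ^ 2 + if i = j then ‖a i + u i‖ ^ 2 - ‖u i‖ ^ 2 else 0 := by
    intro i j
    by_cases hij : i = j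
    · subst hij
      simp
    · simp [hij]
  refine sum_congr rfl fun i _ => ?_
  simp only [hentry, sum_add_distrib, sum_const, card_univ, nsmul_eq_mul, sum_ite_eq, mem_univ,
    if_true]
  ring

end Frobenius

/-- The roots are `z 0, …, z m` (so `n = m + 1`); the matrix is indexed by the first `m`. -/
noncomputable def criticalMatrix (z : ℕ → ℂ) (m : ℕ) : Matrix (Fin m) (Fin m) ℂ :=
  diagonal (fun j : Fin m => z j) + of fun (j _ : Fin m) => (z m - z j) / (m + 1)

section CriticalMatrix

variable {z : ℕ → ℂ} {m : ℕ} {w : ℂ}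

theorem criticalMatrix_mulVec_apply (x : Fin m → ℂ) (j : Fin m) :
    (criticalMatrix z m *ᵥ x) j = z j * x j + (z m - z j) / (m + 1) * ∑ k, x k := by
  rw [criticalMatrix, add_mulVec, Pi.add_apply, mulVec_diagonal, mulVec, dotProduct, mul_sum]
  simp only [of_apply]

theorem criticalMatrix_mulVec_eq_smul_iff {x : Fin m → ℂ} :
    criticalMatrix z m *ᵥ x = w • x ↔
      ∀ j : Fin m, (w - z j) * x j = (z m - z j) * (∑ k, x k) / (m + 1) := by
  simp only [funext_iff, criticalMatrix_mulVec_apply, Pi.smul_apply, smul_eq_mul]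
  refine forall_congr' fun j => ?_
  constructor <;> intro h <;> linear_combination (-1 : ℂ) * h

theorem criticalMatrix_mulVec_single_sub_single {a b : Fin m} (ha : z a = w) (hb : z b = w) :
    criticalMatrix z m *ᵥ (Pi.single a 1 - Pi.single b 1)
      = w • (Pi.single a 1 - Pi.single b 1) := by
  rw [criticalMatrix_mulVec_eq_smul_iff]
  intro j
  have hsum : ∑ k, (Pi.single a 1 - Pi.single b 1 : Fin m → ℂ) k = 0 := by
    simp [sum_sub_distrib]
  rw [hsum, mul_zero, zero_div]
  simp only [Pi.sub_apply, Pi.single_apply]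
  split_ifs <;> simp_all

theorem criticalMatrix_mulVec_one_add_single {a : Fin m} (ha : z a = w) (hm : z m = w) :
    criticalMatrix z m *ᵥ (1 + Pi.single a 1) = w • (1 + Pi.single a 1) := by
  rw [criticalMatrix_mulVec_eq_smul_iff]
  intro j
  have hsum : ∑ k, (1 + Pi.single a 1 : Fin m → ℂ) k = m + 1 := by
    simp [sum_add_distrib]
  rw [hsum, mul_div_cancel_right₀ _ (Nat.cast_add_one_ne_zero m), hm]
  by_cases hja : j = a
  · subst hja
    simp [ha]
  · simp [hja]

theorem sum_sub_div_sub_eq_of_sum_inv_sub_eq_zero (hz : ∀ j ∈ range (m + 1), z j ≠ w)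
    (hsum : ∑ j ∈ range (m + 1), (w - z j)⁻¹ = 0) :
    ∑ j : Fin m, (z m - z j) / (w - z j) = m + 1 := by
  have h := sum_sub_div_sub_eq_card_of_sum_inv_sub_eq_zero hz hsum (z m)
  rwa [sum_range_succ, sub_self, zero_div, add_zero, card_range, Nat.cast_add_one,
    ← Fin.sum_univ_eq_sum_range (fun k => (z m - z k) / (w - z k))] at h

theorem criticalMatrix_mulVec_sub_div_sub (hz : ∀ j ∈ range (m + 1), z j ≠ w)
    (hsum : ∑ j ∈ range (m + 1), (w - z j)⁻¹ = 0) :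
    criticalMatrix z m *ᵥ (fun j => (z m - z j) / (w - z j))
      = w • fun j : Fin m => (z m - z j) / (w - z j) := by
  rw [criticalMatrix_mulVec_eq_smul_iff]
  intro j
  have hj : (j : ℕ) ∈ range (m + 1) := mem_range.2 (Nat.lt_succ_of_lt j.2)
  rw [sum_sub_div_sub_eq_of_sum_inv_sub_eq_zero hz hsum,
    mul_div_cancel_right₀ _ (Nat.cast_add_one_ne_zero m),
    mul_div_cancel₀ _ (sub_ne_zero.2 (hz j hj).symm)]

theorem exists_criticalMatrix_mulVec_eq_smul
    (hw : (derivative (∏ j ∈ range (m + 1), (X - C (z j)))).IsRoot w) :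
    ∃ x ≠ 0, criticalMatrix z m *ᵥ x = w • x := by
  by_cases hroot : ∃ i ∈ range (m + 1), z i = w
  · obtain ⟨i, hi, hzi⟩ := hroot
    obtain ⟨k, hk, hki, hzk⟩ := exists_ne_eq_of_isRoot_derivative_prod hw hi hzi
    obtain ⟨a, b, hab, hb, hza, hzb⟩ : ∃ a b, a < b ∧ b < m + 1 ∧ z a = w ∧ z b = w := by
      rw [mem_range] at hi hk
      rcases lt_or_gt_of_ne hki with h | h
      exacts [⟨k, i, h, hi, hzk, hzi⟩, ⟨i, k, h, hk, hzi, hzk⟩]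
    have ha : a < m := by omega
    rcases Nat.lt_succ_iff_lt_or_eq.1 hb with hb | rfl
    · refine ⟨_, fun h => ?_,
        criticalMatrix_mulVec_single_sub_single (a := ⟨a, ha⟩) (b := ⟨b, hb⟩) hza hzb⟩
      simpa [Fin.ext_iff, hab.ne] using congr_fun h ⟨a, ha⟩
    · refine ⟨_, fun h => ?_, criticalMatrix_mulVec_one_add_single (a := ⟨a, ha⟩) hza hzb⟩
      have := congr_fun h ⟨a, ha⟩
      norm_num at this
  · push Not at hroot
    have hsum := sum_inv_sub_eq_zero_of_isRoot_derivative_prod hw hroot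
    refine ⟨_, fun h => ?_, criticalMatrix_mulVec_sub_div_sub hroot hsum⟩
    have hxsum := sum_sub_div_sub_eq_of_sum_inv_sub_eq_zero hroot hsum
    rw [h] at hxsum
    simp only [Pi.zero_apply, sum_const_zero] at hxsum
    exact Nat.cast_add_one_ne_zero m hxsum.symm

theorem trace_criticalMatrix :
    (criticalMatrix z m).trace = m * ((∑ j ∈ range (m + 1), z j) / (m + 1)) := by
  rw [criticalMatrix, trace_add, trace_diagonal]
  simp only [trace, diag_apply, of_apply]
  rw [← sum_div, sum_sub_distrib, sum_const, card_univ, Fintype.card_fin, nsmul_eq_mul,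
    Fin.sum_univ_eq_sum_range (fun j => z j), sum_range_succ]
  field_simp
  ring

theorem criticalMatrix_sub_smul_one (c : ℂ) :
    criticalMatrix z m - c • 1
      = diagonal (fun j : Fin m => z j - c) + of fun (j _ : Fin m) => (z m - z j) / (m + 1) := by
  rw [criticalMatrix, smul_one_eq_diagonal, add_sub_right_comm, diagonal_sub]

theorem sum_norm_sq_criticalMatrix_sub_smul_one :
    ∑ i, ∑ j, ‖(criticalMatrix z m - ((∑ j ∈ range (m + 1), z j) / (m + 1)) • 1) i j‖ ^ 2
      = ∑ j ∈ range m, ‖(m * z j + z m) / (m + 1)‖ ^ 2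
        + (m - 1) / (m + 1) ^ 2 * ∑ j ∈ range m, ‖z m - z j‖ ^ 2
        - m / (m + 1) ^ 2 * ‖∑ j ∈ range (m + 1), z j‖ ^ 2 := by
  set c := (∑ j ∈ range (m + 1), z j) / (m + 1)
  have hm : (m + 1 : ℂ) ≠ 0 := Nat.cast_add_one_ne_zero m
  have hnorm : ‖(m + 1 : ℂ)‖ = m + 1 := by exact_mod_cast Complex.norm_natCast (m + 1)
  have hcenter : ∀ j, z j - c + (z m - z j) / (m + 1) = (m * z j + z m) / (m + 1) - c := by
    intro j
    field_simp
    ring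
  have htotal : ∑ j ∈ range (m + 1), z j = (m + 1) * c := (mul_div_cancel₀ _ hm).symm
  have hmean : ∑ j ∈ range m, (m * z j + z m) / (m + 1) = #(range m) • c := by
    rw [← sum_div, sum_add_distrib, ← mul_sum, sum_const, card_range, nsmul_eq_mul,
      nsmul_eq_mul, div_eq_iff hm]
    rw [sum_range_succ] at htotal
    linear_combination (m : ℂ) * htotal
  rw [criticalMatrix_sub_smul_one, sum_norm_sq_diagonal_add_of, Fintype.card_fin,
    sum_add_distrib, ← mul_sum]
  simp only [hcenter]
  rw [Fin.sum_univ_eq_sum_range (fun j => ‖(m * z j + z m) / (m + 1) - c‖ ^ 2),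
    Fin.sum_univ_eq_sum_range (fun j => ‖(z m - z j) / (m + 1)‖ ^ 2),
    sum_norm_sq_sub_of_sum_eq _ _ _ hmean, card_range, htotal, norm_mul, hnorm]
  simp only [norm_div, hnorm, div_pow, ← sum_div]
  field_simp
  ring

end CriticalMatrix

theorem critical_points_in_disk
    (n : ℕ) (hn : 2 ≤ n) (z : ℕ → ℂ) (w : ℂ)
    (hw : (Polynomial.derivative
        (∏ j ∈ Finset.range n, (X - C (z j)))).IsRoot w) :
    ‖w - (∑ j ∈ Finset.range n, z j) / (n : ℂ)‖
      ≤ Real.sqrt (((n : ℝ) - 2) / ((n : ℝ) - 1)) *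
        Real.sqrt
          ((∑ j ∈ Finset.range (n - 1),
              ‖(((n : ℝ) - 1) / (n : ℝ) : ℝ) * z j
                + ((1 / (n : ℝ) : ℝ) : ℂ) * z (n - 1)‖ ^ 2)
            + (((n : ℝ) - 2) / (n : ℝ) ^ 2) *
              ∑ j ∈ Finset.range (n - 1), ‖z (n - 1) - z j‖ ^ 2
            - (((n : ℝ) - 1) / (n : ℝ) ^ 2) *
                ‖∑ j ∈ Finset.range n, z j‖ ^ 2) := by
  obtain ⟨m, rfl⟩ : ∃ m, n = m + 1 := ⟨n - 1, by omega⟩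
  set c := (∑ j ∈ range (m + 1), z j) / (m + 1 : ℂ)
  obtain ⟨x, hx, hMx⟩ := exists_criticalMatrix_mulVec_eq_smul hw
  have htrace : (criticalMatrix z m - c • 1).trace = 0 := by
    rw [trace_sub, trace_criticalMatrix, trace_smul, trace_one, Fintype.card_fin, smul_eq_mul,
      mul_comm, sub_self]
  have heigen : (criticalMatrix z m - c • 1) *ᵥ x = (w - c) • x := by
    rw [sub_mulVec, hMx, smul_mulVec, one_mulVec, sub_smul]
  have hbound := norm_sq_le_of_trace_eq_zero htrace hx heigen
  rw [sum_norm_sq_criticalMatrix_sub_smul_one, Fintype.card_fin] at hbound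
  have hm : (1 : ℝ) ≤ m := by norm_cast; omega
  have hratio : ((m : ℝ) + 1 - 2) / ((m : ℝ) + 1 - 1) = (m - 1) / m := by ring
  have hcoeff : ∀ j, (m / (m + 1) * z j + 1 / (m + 1) * z m : ℂ) = (m * z j + z m) / (m + 1) :=
    fun j => by ring
  simp only [Nat.add_sub_cancel]
  push_cast
  rw [hratio, ← Real.sqrt_mul (div_nonneg (sub_nonneg.2 hm) (by positivity))]
  simp only [hcoeff, add_sub_cancel_right, show (m : ℝ) + 1 - 2 = m - 1 by ring]
  exact Real.le_sqrt_of_sq_le hbound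
end
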